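/- Let $\mathfrak{O}$ be the ring of integers of a finite extension of $\mathbb{Q}_p$ with maximal ideal $\mathfrak{M}$, residue field of size $q > 3$, and uniformizer $\pi$. For $n \geq 1$ let $J_n^+ := \begin{pmatrix}\mathfrak{O}^{\times} & \mathfrak{O} \\ \mathfrak{M}^{n+1} & \mathfrak{O}^{\times}\end{pmatrix} \cap \mathrm{SL}_2(\mathfrak{O})$. Then the Frattini quotient of $J_n^+$ (the quotient by the closure of $(J_n^+)^p [J_n^+, J_n^+]$) is isomorphic, as an abelian group, to $(1+\mathfrak{M})\big/\big((1+\mathfrak{M}^{n+1})(1+\mathfrak{M})^p\big)$, via the map induced by $1 + \pi x \mapsto \mathrm{diag}(1+\pi x, (1+\pi x)^{-1})$. In particular, for $n = 0$ (the Iwahori subgroup $J = J_0^+$), the Frattini quotient is trivial. -/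

import Mathlib

/-!
Fix a unit `x` with `x² - 1` a unit, which exists because the residue field has more than three
elements. Since `[diag(x, x⁻¹), upper(b)] = upper((x² - 1) b)` (and similarly for lower unipotents
with entry in `I`), every unipotent element of `J = lowerCong 𝒪 I` lies in the Frattini subgroup.
For `u ∈ 1 + I`, `diag(u, u⁻¹)` is a product of four unipotents, and by the LDU decomposition
every `g ∈ J` is congruent to `diag(g₀₀, g₀₀⁻¹)`. Hence `u ↦ diag(u, u⁻¹)` induces a surjection
`(1 + 𝔐)/((1 + I)(1 + 𝔐)ᵖ) → J/Φ(J)`.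

The top-left entry is multiplicative modulo `I`, so `g ↦ g₀₀^((q-1)s)` with `(q-1)s ≡ 1 (mod p)`
is a homomorphism `J → (1 + 𝔐)/((1 + I)(1 + 𝔐)ᵖ)` into an abelian group of exponent `p`; it
factors through `J/Φ(J)` and inverts the first map.
-/

open IsLocalRing

/-- The congruence subgroup `Jₙ⁺ = (𝒪ˣ, 𝒪; 𝔐ⁿ⁺¹, 𝒪ˣ) ∩ SL₂(𝒪)` of `SL₂(𝒪)`: matrices
whose lower-left entry lies in the ideal `I` (applied with `I = 𝔐^(n+1)`). -/
def lowerCong (𝒪 : Type*) [CommRing 𝒪] (I : Ideal 𝒪) :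
    Subgroup (Matrix.SpecialLinearGroup (Fin 2) 𝒪) where
  carrier := {g | g 1 0 ∈ I}
  one_mem' := by
    show ((1 : Matrix.SpecialLinearGroup (Fin 2) 𝒪) : Matrix (Fin 2) (Fin 2) 𝒪) 1 0 ∈ I
    simp
  mul_mem' := by
    intro a b ha hb
    show ((a * b : Matrix.SpecialLinearGroup (Fin 2) 𝒪) :
      Matrix (Fin 2) (Fin 2) 𝒪) 1 0 ∈ I
    rw [Matrix.SpecialLinearGroup.coe_mul, Matrix.mul_apply, Fin.sum_univ_two]
    exact I.add_mem (I.mul_mem_right _ ha) (I.mul_mem_left _ hb)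
  inv_mem' := by
    intro a ha
    show ((a⁻¹ : Matrix.SpecialLinearGroup (Fin 2) 𝒪) : Matrix (Fin 2) (Fin 2) 𝒪) 1 0 ∈ I
    rw [Matrix.SpecialLinearGroup.coe_inv, Matrix.adjugate_fin_two]
    simpa using I.neg_mem ha

/-- The subgroup `1 + I` of `𝒪ˣ`: units congruent to `1` modulo the ideal `I`
(as the kernel of `𝒪ˣ → (𝒪/I)ˣ`).  For `I = 𝔐` this is `1 + 𝔐`, for `I = 𝔐^(n+1)` it
is `1 + 𝔐^(n+1)`. -/
def principalUnits (𝒪 : Type*) [CommRing 𝒪] (I : Ideal 𝒪) : Subgroup 𝒪ˣ :=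
  MonoidHom.ker (Units.map (Ideal.Quotient.mk I).toMonoidHom)

/-- The Frattini subgroup `Φ(G) = [G,G]·Gᵖ` of a pro-`p` group `G` (here realized as the
normal closure of the set of commutators and `p`-th powers; for the groups considered in
the statement this subgroup is closed, so it agrees with the topological Frattini
subgroup `closure ([G,G]Gᵖ)`). -/
def frattiniP (G : Type*) [Group G] (p : ℕ) : Subgroup G :=
  Subgroup.normalClosure
    {x : G | (∃ a b : G, x = a * b * a⁻¹ * b⁻¹) ∨ ∃ a : G, x = a ^ p}

instance frattiniP_normal (G : Type*) [Group G] (p : ℕ) : (frattiniP G p).Normal :=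
  Subgroup.normalClosure_normal

/-- The diagonal matrix `diag(u, u⁻¹)` as an element of `SL₂(𝒪)`. -/
def diagSL (𝒪 : Type*) [CommRing 𝒪] (u : 𝒪ˣ) : Matrix.SpecialLinearGroup (Fin 2) 𝒪 :=
  ⟨!![(u : 𝒪), 0; 0, ((u⁻¹ : 𝒪ˣ) : 𝒪)], by simp [Matrix.det_fin_two_of]⟩

/-- `diag(u, u⁻¹)` as an element of the subgroup `lowerCong 𝒪 I`. -/
def diagJ (𝒪 : Type*) [CommRing 𝒪] (I : Ideal 𝒪) (u : 𝒪ˣ) : ↥(lowerCong 𝒪 I) :=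
  ⟨diagSL 𝒪 u, by
    show ((diagSL 𝒪 u : Matrix.SpecialLinearGroup (Fin 2) 𝒪) :
      Matrix (Fin 2) (Fin 2) 𝒪) 1 0 ∈ I
    simp [diagSL]⟩

section Frattini

variable {G : Type*} [Group G] {p : ℕ}

theorem commutator_mem_frattiniP (a b : G) : a * b * a⁻¹ * b⁻¹ ∈ frattiniP G p :=
  Subgroup.subset_normalClosure (Or.inl ⟨a, b, rfl⟩)

theorem pow_mem_frattiniP (a : G) : a ^ p ∈ frattiniP G p :=
  Subgroup.subset_normalClosure (Or.inr ⟨a, rfl⟩)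

theorem frattiniP_quotient_pow_eq_one (y : G ⧸ frattiniP G p) : y ^ p = 1 :=
  QuotientGroup.induction_on y fun a =>
    (QuotientGroup.eq_one_iff _).mpr (pow_mem_frattiniP a)

theorem frattiniP_le_ker {A : Type*} [CommGroup A] (f : G →* A) (hf : ∀ a : A, a ^ p = 1) :
    frattiniP G p ≤ f.ker := by
  refine Subgroup.normalClosure_le_normal ?_
  rintro _ (⟨a, b, rfl⟩ | ⟨a, rfl⟩)
  · simp [mul_comm (f a)]
  · simp [hf]

end Frattini

theorem pow_eq_self_of_mod_eq_one {M : Type*} [Monoid M] {x : M} {p n : ℕ} (hx : x ^ p = 1)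
    (hn : n % p = 1) : x ^ n = x := by
  rw [pow_eq_pow_mod n hx, hn, pow_one]

theorem mem_principalUnits_iff {𝒪 : Type*} [CommRing 𝒪] {I : Ideal 𝒪} {u : 𝒪ˣ} :
    u ∈ principalUnits 𝒪 I ↔ (u : 𝒪) - 1 ∈ I := by
  rw [principalUnits, MonoidHom.mem_ker, Units.ext_iff, ← Ideal.Quotient.eq]
  rfl

theorem isLocalHom_quotient_mk_of_le_maximalIdeal {𝒪 : Type*} [CommRing 𝒪] [IsLocalRing 𝒪]
    {I : Ideal 𝒪} (hI : I ≤ maximalIdeal 𝒪) : IsLocalHom (Ideal.Quotient.mk I) :=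
  isLocalHom_of_le_jacobson_bot I (hI.trans (maximalIdeal_le_jacobson ⊥))

namespace lowerCong

variable {𝒪 : Type*} [CommRing 𝒪] {I : Ideal 𝒪}

theorem ext' {g h : lowerCong 𝒪 I}
    (H : (g : Matrix (Fin 2) (Fin 2) 𝒪) = h) : g = h :=
  Subtype.ext (Subtype.ext H)

@[simp] theorem coe_mul (g h : lowerCong 𝒪 I) :
    ((g * h : lowerCong 𝒪 I) : Matrix (Fin 2) (Fin 2) 𝒪) = g * h := rfl

@[simp] theorem coe_diagJ (u : 𝒪ˣ) :
    (diagJ 𝒪 I u : Matrix (Fin 2) (Fin 2) 𝒪) = !![(u : 𝒪), 0; 0, ((u⁻¹ : 𝒪ˣ) : 𝒪)] := rfl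

variable (I) in
def upperJ (b : 𝒪) : lowerCong 𝒪 I :=
  ⟨⟨!![1, b; 0, 1], by simp [Matrix.det_fin_two_of]⟩, I.zero_mem⟩

def lowerJ (c : 𝒪) (hc : c ∈ I) : lowerCong 𝒪 I :=
  ⟨⟨!![1, 0; c, 1], by simp [Matrix.det_fin_two_of]⟩, hc⟩

@[simp] theorem coe_upperJ (b : 𝒪) :
    (upperJ I b : Matrix (Fin 2) (Fin 2) 𝒪) = !![1, b; 0, 1] := rfl

@[simp] theorem coe_lowerJ (c : 𝒪) (hc : c ∈ I) :
    (lowerJ c hc : Matrix (Fin 2) (Fin 2) 𝒪) = !![1, 0; c, 1] := rfl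

variable (I) in
def diagHom : 𝒪ˣ →* lowerCong 𝒪 I where
  toFun := diagJ 𝒪 I
  map_one' := ext' <| by simp [Matrix.one_fin_two]
  map_mul' u v := ext' <| by simp [mul_comm]

theorem diagJ_pow (u : 𝒪ˣ) (n : ℕ) : diagJ 𝒪 I (u ^ n) = diagJ 𝒪 I u ^ n :=
  map_pow (diagHom I) u n

theorem upperJ_add (b b' : 𝒪) : upperJ I (b + b') = upperJ I b * upperJ I b' :=
  ext' <| by simp [add_comm]

theorem lowerJ_add {c c' : 𝒪} (hc : c ∈ I) (hc' : c' ∈ I) :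
    lowerJ (c + c') (I.add_mem hc hc') = lowerJ c hc * lowerJ c' hc' :=
  ext' <| by simp

theorem diagJ_mul_upperJ (x : 𝒪ˣ) (b : 𝒪) :
    diagJ 𝒪 I x * upperJ I b = upperJ I (x * x * b) * diagJ 𝒪 I x :=
  ext' <| by simp; linear_combination (-(x : 𝒪) * b) * x.mul_inv

theorem diagJ_mul_lowerJ (x : 𝒪ˣ) {c : 𝒪} (hc : c ∈ I) :
    diagJ 𝒪 I x⁻¹ * lowerJ c hc = lowerJ (x * x * c) (I.mul_mem_left _ hc) * diagJ 𝒪 I x⁻¹ :=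
  ext' <| by simp; linear_combination (-(x : 𝒪) * c) * x.mul_inv

theorem upperJ_inv (b : 𝒪) : (upperJ I b)⁻¹ = upperJ I (-b) :=
  inv_eq_of_mul_eq_one_right <| by
    rw [← upperJ_add, add_neg_cancel]; exact ext' <| by simp [Matrix.one_fin_two]

theorem lowerJ_inv {c : 𝒪} (hc : c ∈ I) : (lowerJ c hc)⁻¹ = lowerJ (-c) (I.neg_mem hc) :=
  inv_eq_of_mul_eq_one_right <| ext' <| by simp [Matrix.one_fin_two]

theorem diagJ_upperJ_commutator (x : 𝒪ˣ) (b : 𝒪) :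
    diagJ 𝒪 I x * upperJ I b * (diagJ 𝒪 I x)⁻¹ * (upperJ I b)⁻¹ = upperJ I ((x * x - 1) * b) := by
  rw [diagJ_mul_upperJ, mul_inv_cancel_right, upperJ_inv, ← upperJ_add, sub_one_mul,
    sub_eq_add_neg]

theorem diagJ_lowerJ_commutator (x : 𝒪ˣ) {c : 𝒪} (hc : c ∈ I) :
    diagJ 𝒪 I x⁻¹ * lowerJ c hc * (diagJ 𝒪 I x⁻¹)⁻¹ * (lowerJ c hc)⁻¹ =
      lowerJ ((x * x - 1) * c) (I.mul_mem_left _ hc) := by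
  rw [diagJ_mul_lowerJ, mul_inv_cancel_right, lowerJ_inv, ← lowerJ_add]
  congr 1
  ring

variable {p : ℕ} {x : 𝒪ˣ}

theorem upperJ_mem_frattiniP (hx : IsUnit ((x : 𝒪) * x - 1)) (b : 𝒪) :
    upperJ I b ∈ frattiniP (lowerCong 𝒪 I) p := by
  obtain ⟨e, he⟩ := hx
  convert commutator_mem_frattiniP (diagJ 𝒪 I x) (upperJ I (e⁻¹ * b)) using 1
  rw [diagJ_upperJ_commutator, ← he, ← mul_assoc, Units.mul_inv, one_mul]

theorem lowerJ_mem_frattiniP (hx : IsUnit ((x : 𝒪) * x - 1)) {c : 𝒪} (hc : c ∈ I) :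
    lowerJ c hc ∈ frattiniP (lowerCong 𝒪 I) p := by
  obtain ⟨e, he⟩ := hx
  convert commutator_mem_frattiniP (diagJ 𝒪 I x⁻¹) (lowerJ (e⁻¹ * c) (I.mul_mem_left _ hc))
    using 1
  rw [diagJ_lowerJ_commutator]
  congr 1
  rw [← he, ← mul_assoc, Units.mul_inv, one_mul]

theorem diagJ_eq_upperJ_mul_lowerJ (u : 𝒪ˣ) (hu : (u : 𝒪) - 1 ∈ I) :
    diagJ 𝒪 I u = upperJ I (-u) * lowerJ _ (I.neg_mem (I.mul_mem_left (u⁻¹ : 𝒪ˣ) hu)) *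
      upperJ I 1 * lowerJ _ hu :=
  ext' <| by
    ext i j
    fin_cases i <;> fin_cases j <;> simp [Matrix.mul_apply]
    · linear_combination ((u : 𝒪) - 1) * u.inv_mul
    · linear_combination u.inv_mul

theorem eq_lowerJ_mul_diagJ_mul_upperJ (g : lowerCong 𝒪 I) (a : 𝒪ˣ)
    (ha : (a : 𝒪) = (g : Matrix (Fin 2) (Fin 2) 𝒪) 0 0) :
    g = lowerJ _ (I.mul_mem_right ((a⁻¹ : 𝒪ˣ) : 𝒪) g.2) * diagJ 𝒪 I a *
      upperJ I ((a⁻¹ : 𝒪ˣ) * (g : Matrix (Fin 2) (Fin 2) 𝒪) 0 1) :=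
  ext' <| by
    have hdet := (g : Matrix.SpecialLinearGroup (Fin 2) 𝒪).2
    rw [Matrix.det_fin_two] at hdet
    ext i j
    fin_cases i <;> fin_cases j <;> simp [Matrix.mul_apply]
    · exact ha.symm
    · linear_combination -(g : Matrix (Fin 2) (Fin 2) 𝒪) 1 1 * a.inv_mul +
        ((a⁻¹ : 𝒪ˣ) : 𝒪) * hdet + ((a⁻¹ : 𝒪ˣ) : 𝒪) * (g : Matrix (Fin 2) (Fin 2) 𝒪) 1 1 * ha

theorem diagJ_mem_frattiniP (hx : IsUnit ((x : 𝒪) * x - 1)) {u : 𝒪ˣ}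
    (hu : u ∈ principalUnits 𝒪 I) : diagJ 𝒪 I u ∈ frattiniP (lowerCong 𝒪 I) p := by
  rw [mem_principalUnits_iff] at hu
  rw [diagJ_eq_upperJ_mul_lowerJ u hu]
  exact mul_mem (mul_mem (mul_mem (upperJ_mem_frattiniP hx _) (lowerJ_mem_frattiniP hx _))
    (upperJ_mem_frattiniP hx _)) (lowerJ_mem_frattiniP hx _)

variable (I) in
def diagResidue : lowerCong 𝒪 I →* (𝒪 ⧸ I)ˣ where
  toFun g := Units.mkOfMulEqOne (Ideal.Quotient.mk I ((g : Matrix (Fin 2) (Fin 2) 𝒪) 0 0))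
    (Ideal.Quotient.mk I ((g : Matrix (Fin 2) (Fin 2) 𝒪) 1 1)) <| by
      have hdet := (g : Matrix.SpecialLinearGroup (Fin 2) 𝒪).2
      rw [Matrix.det_fin_two] at hdet
      rw [← map_mul, ← map_one (Ideal.Quotient.mk I), Ideal.Quotient.eq]
      convert I.mul_mem_left ((g : Matrix (Fin 2) (Fin 2) 𝒪) 0 1) g.2 using 1
      linear_combination hdet
  map_one' := Units.ext <| by simp
  map_mul' g h := Units.ext <| by
    simp [Matrix.mul_apply, Ideal.Quotient.eq_zero_iff_mem.mpr h.2]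

theorem diagResidue_diagJ (u : 𝒪ˣ) :
    diagResidue I (diagJ 𝒪 I u) = Units.map (Ideal.Quotient.mk I).toMonoidHom u :=
  Units.ext rfl

theorem exists_diagJ_eq_mk [IsLocalRing 𝒪] (hI : I ≤ maximalIdeal 𝒪)
    (hx : IsUnit ((x : 𝒪) * x - 1)) (g : lowerCong 𝒪 I) :
    ∃ a : 𝒪ˣ, (diagJ 𝒪 I a : lowerCong 𝒪 I ⧸ frattiniP (lowerCong 𝒪 I) p) = g := by
  have := isLocalHom_quotient_mk_of_le_maximalIdeal hI
  obtain ⟨a, ha⟩ := isUnit_of_map_unit (Ideal.Quotient.mk I) _ (diagResidue I g).isUnit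
  refine ⟨a, ?_⟩
  conv_rhs => rw [eq_lowerJ_mul_diagJ_mul_upperJ g a ha]
  rw [QuotientGroup.mk_mul, QuotientGroup.mk_mul,
    (QuotientGroup.eq_one_iff _).mpr (lowerJ_mem_frattiniP hx _),
    (QuotientGroup.eq_one_iff _).mpr (upperJ_mem_frattiniP hx _), one_mul, mul_one]

end lowerCong

section ResidueField

variable {𝒪 : Type*} [CommRing 𝒪] [IsLocalRing 𝒪]

theorem exists_isUnit_mul_self_sub_one (hq : 3 < Nat.card (ResidueField 𝒪)) :
    ∃ x : 𝒪ˣ, IsUnit ((x : 𝒪) * x - 1) := by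
  classical
  have hfin : Finite (ResidueField 𝒪) := Nat.finite_of_card_ne_zero (by omega)
  obtain ⟨A, -, hA⟩ := Set.exists_mem_notMem_of_ncard_lt_ncard
    (s := (({0, 1, -1} : Finset (ResidueField 𝒪)) : Set (ResidueField 𝒪))) (t := Set.univ)
    (by rw [Set.ncard_coe_finset, Set.ncard_univ]; exact Finset.card_le_three.trans_lt hq)
  simp only [Finset.coe_insert, Finset.coe_singleton, Set.mem_insert_iff,
    Set.mem_singleton_iff, not_or] at hA
  obtain ⟨hA0, hA1, hA2⟩ := hA
  obtain ⟨y, rfl⟩ := residue_surjective A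
  have hy : IsUnit y := (residue_ne_zero_iff_isUnit y).mp hA0
  refine ⟨hy.unit, (residue_ne_zero_iff_isUnit _).mp ?_⟩
  rw [IsUnit.unit_spec, map_sub, map_mul, map_one, sub_ne_zero, Ne, mul_self_eq_one_iff]
  exact not_or.mpr ⟨hA1, hA2⟩

theorem pow_card_sub_one_mem_principalUnits (a : 𝒪ˣ) :
    a ^ (Nat.card (ResidueField 𝒪) - 1) ∈ principalUnits 𝒪 (maximalIdeal 𝒪) := by
  rw [principalUnits, MonoidHom.mem_ker, map_pow, ← Nat.card_units]
  exact pow_card_eq_one'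

end ResidueField

theorem exists_card_sub_one_mul_mod_eq_one {R : Type*} [Ring R] [Finite R] {p : ℕ} (hp : p.Prime)
    [CharP R p] : ∃ s : ℕ, (Nat.card R - 1) * s % p = 1 := by
  classical
  have := Fintype.ofFinite R
  have hpq : p ∣ Nat.card R := by
    rw [← CharP.cast_eq_zero_iff R, Nat.card_eq_fintype_card]
    exact Nat.cast_card_eq_zero R
  have hcop : (Nat.card R - 1).Coprime p :=
    ((Nat.coprime_self_sub_left Nat.card_pos).mpr (Nat.coprime_one_left _)).coprime_dvd_right hpq
  obtain ⟨s, -, hs⟩ := Nat.exists_mul_mod_eq_one_of_coprime hcop hp.one_lt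
  exact ⟨s, hs⟩

section FrattiniQuotient

variable {𝒪 : Type*} [CommRing 𝒪] [IsLocalRing 𝒪] {I : Ideal 𝒪} {p : ℕ}

variable (𝒪) in
abbrev principalUnitsFrattini (I : Ideal 𝒪) (p : ℕ) :
    Subgroup (principalUnits 𝒪 (maximalIdeal 𝒪)) :=
  (principalUnits 𝒪 I ⊔ (principalUnits 𝒪 (maximalIdeal 𝒪)).map (powMonoidHom p)).subgroupOf
    (principalUnits 𝒪 (maximalIdeal 𝒪))

theorem principalUnitsFrattini_quotient_pow_eq_one
    (y : principalUnits 𝒪 (maximalIdeal 𝒪) ⧸ principalUnitsFrattini 𝒪 I p) : y ^ p = 1 :=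
  QuotientGroup.induction_on y fun u => (QuotientGroup.eq_one_iff _).mpr <|
    Subgroup.mem_subgroupOf.mpr <| Subgroup.mem_sup_right ⟨u, u.2, rfl⟩

variable (𝒪) in
noncomputable def principalUnitsPow (s : ℕ) : 𝒪ˣ →* principalUnits 𝒪 (maximalIdeal 𝒪) :=
  (powMonoidHom ((Nat.card (ResidueField 𝒪) - 1) * s)).codRestrict _ fun a => by
    rw [powMonoidHom_apply, pow_mul]
    exact pow_mem (pow_card_sub_one_mem_principalUnits a) s

theorem coe_principalUnitsPow (s : ℕ) (a : 𝒪ˣ) :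
    (principalUnitsPow 𝒪 s a : 𝒪ˣ) = a ^ ((Nat.card (ResidueField 𝒪) - 1) * s) :=
  rfl

theorem principalUnitsPow_coe (s : ℕ) (u : principalUnits 𝒪 (maximalIdeal 𝒪)) :
    principalUnitsPow 𝒪 s u = u ^ ((Nat.card (ResidueField 𝒪) - 1) * s) :=
  Subtype.ext rfl

theorem principalUnitsFrattini_le_ker {x : 𝒪ˣ} (hx : IsUnit ((x : 𝒪) * x - 1)) :
    principalUnitsFrattini 𝒪 I p ≤ ((QuotientGroup.mk' (frattiniP (lowerCong 𝒪 I) p)).comp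
      ((lowerCong.diagHom I).comp (principalUnits 𝒪 (maximalIdeal 𝒪)).subtype)).ker := by
  intro u hu
  obtain ⟨y, hy, z, hz, hyz⟩ := Subgroup.mem_sup.mp (Subgroup.mem_subgroupOf.mp hu)
  obtain ⟨w, -, rfl⟩ := Subgroup.mem_map.mp hz
  rw [MonoidHom.mem_ker, MonoidHom.comp_apply, QuotientGroup.mk'_apply,
    QuotientGroup.eq_one_iff, MonoidHom.comp_apply, Subgroup.subtype_apply, ← hyz, map_mul,
    powMonoidHom_apply, map_pow]
  exact mul_mem (lowerCong.diagJ_mem_frattiniP hx hy) (pow_mem_frattiniP _)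

theorem units_map_quotient_mk_surjective (hI : I ≤ maximalIdeal 𝒪) :
    Function.Surjective (Units.map (Ideal.Quotient.mk I).toMonoidHom) :=
  IsLocalRing.surjective_units_map_of_local_ringHom _ Ideal.Quotient.mk_surjective
    (isLocalHom_quotient_mk_of_le_maximalIdeal hI)

noncomputable def topLeftHom (hI : I ≤ maximalIdeal 𝒪) (p s : ℕ) :
    lowerCong 𝒪 I →* principalUnits 𝒪 (maximalIdeal 𝒪) ⧸ principalUnitsFrattini 𝒪 I p :=
  ((Units.map (Ideal.Quotient.mk I).toMonoidHom).liftOfSurjective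
    (units_map_quotient_mk_surjective hI)
    ⟨(QuotientGroup.mk' (principalUnitsFrattini 𝒪 I p)).comp (principalUnitsPow 𝒪 s), fun _ hu =>
      (QuotientGroup.eq_one_iff _).mpr <| Subgroup.mem_subgroupOf.mpr <|
        Subgroup.mem_sup_left (pow_mem hu _)⟩).comp (lowerCong.diagResidue I)

theorem topLeftHom_diagJ (hI : I ≤ maximalIdeal 𝒪) (s : ℕ) (a : 𝒪ˣ) :
    topLeftHom hI p s (diagJ 𝒪 I a) = principalUnitsPow 𝒪 s a := by
  rw [topLeftHom, MonoidHom.comp_apply, lowerCong.diagResidue_diagJ,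
    MonoidHom.liftOfRightInverse_comp_apply]
  rfl

end FrattiniQuotient

theorem exists_mulEquiv_lowerCong_quotient_frattiniP {𝒪 : Type*} [CommRing 𝒪] [IsLocalRing 𝒪]
    {I : Ideal 𝒪} (hI : I ≤ maximalIdeal 𝒪) {p : ℕ} (hp : p.Prime)
    [CharP (ResidueField 𝒪) p] (hq : 3 < Nat.card (ResidueField 𝒪)) :
    ∃ e : principalUnits 𝒪 (maximalIdeal 𝒪) ⧸ principalUnitsFrattini 𝒪 I p ≃*
        lowerCong 𝒪 I ⧸ frattiniP (lowerCong 𝒪 I) p,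
      ∀ u : principalUnits 𝒪 (maximalIdeal 𝒪), e u = diagJ 𝒪 I u := by
  have : Finite (ResidueField 𝒪) := Nat.finite_of_card_ne_zero (by omega)
  obtain ⟨x, hx⟩ := exists_isUnit_mul_self_sub_one hq
  obtain ⟨s, hs⟩ := exists_card_sub_one_mul_mod_eq_one (R := ResidueField 𝒪) hp
  let φ := QuotientGroup.lift _ _ (principalUnitsFrattini_le_ker (I := I) (p := p) hx)
  let ψ := QuotientGroup.lift _ (topLeftHom hI p s)
    (frattiniP_le_ker (A := principalUnits 𝒪 (maximalIdeal 𝒪) ⧸ principalUnitsFrattini 𝒪 I p) _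
      principalUnitsFrattini_quotient_pow_eq_one)
  have hφ (u : principalUnits 𝒪 (maximalIdeal 𝒪)) : φ u = diagJ 𝒪 I u := rfl
  have hψ (a : 𝒪ˣ) : ψ (diagJ 𝒪 I a) = principalUnitsPow 𝒪 s a := topLeftHom_diagJ hI s a
  refine ⟨MonoidHom.toMulEquiv φ ψ ?_ ?_, hφ⟩
  · ext u
    simp only [MonoidHom.comp_apply, QuotientGroup.mk'_apply, MonoidHom.id_apply, hφ, hψ]
    rw [principalUnitsPow_coe, QuotientGroup.mk_pow,
      pow_eq_self_of_mod_eq_one (principalUnitsFrattini_quotient_pow_eq_one _) hs]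
  · ext g
    obtain ⟨a, ha⟩ := lowerCong.exists_diagJ_eq_mk hI hx g
    simp only [MonoidHom.comp_apply, QuotientGroup.mk'_apply, MonoidHom.id_apply]
    rw [← ha, hψ, hφ, coe_principalUnitsPow, lowerCong.diagJ_pow, QuotientGroup.mk_pow,
      pow_eq_self_of_mod_eq_one (frattiniP_quotient_pow_eq_one _) hs]

/-- let `𝒪` be the ring of integers of a finite extension of `ℚ_p`
(modelled as a discrete valuation ring with residue characteristic `p` and residue field of
cardinality `q > 3`).  For `n ≥ 1`, the Frattini quotient of
`Jₙ⁺ = (𝒪ˣ, 𝒪; 𝔐^(n+1), 𝒪ˣ) ∩ SL₂(𝒪)` is isomorphic, as a group, to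
`(1+𝔐)/((1+𝔐^(n+1))(1+𝔐)ᵖ)` via the map induced by `t ↦ diag(t, t⁻¹)`.
In particular for `n = 0` (the Iwahori subgroup `J = J₀⁺`), the Frattini quotient is
trivial. -/
theorem stmt19 (𝒪 : Type*) [CommRing 𝒪] [IsDomain 𝒪] [IsDiscreteValuationRing 𝒪]
    (p : ℕ) (hp : p.Prime) (hchar : CharP (ResidueField 𝒪) p)
    (hq : 3 < Nat.card (ResidueField 𝒪)) :
    (∀ n : ℕ, 1 ≤ n →
      ∃ e : (↥(principalUnits 𝒪 (maximalIdeal 𝒪)) ⧸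
          ((principalUnits 𝒪 (maximalIdeal 𝒪 ^ (n + 1)) ⊔
            (principalUnits 𝒪 (maximalIdeal 𝒪)).map (powMonoidHom p)).subgroupOf
            (principalUnits 𝒪 (maximalIdeal 𝒪)))) ≃*
        (↥(lowerCong 𝒪 (maximalIdeal 𝒪 ^ (n + 1))) ⧸
          frattiniP (↥(lowerCong 𝒪 (maximalIdeal 𝒪 ^ (n + 1)))) p),
        ∀ u : ↥(principalUnits 𝒪 (maximalIdeal 𝒪)),
          e (QuotientGroup.mk u) =
            QuotientGroup.mk (diagJ 𝒪 (maximalIdeal 𝒪 ^ (n + 1)) (↑u))) ∧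
    (∀ x : (↥(lowerCong 𝒪 (maximalIdeal 𝒪 ^ (0 + 1))) ⧸
        frattiniP (↥(lowerCong 𝒪 (maximalIdeal 𝒪 ^ (0 + 1)))) p), x = 1) := by
  refine ⟨fun n _ => exists_mulEquiv_lowerCong_quotient_frattiniP
    (Ideal.pow_le_self n.succ_ne_zero) hp hq, fun y => ?_⟩
  obtain ⟨e, -⟩ := exists_mulEquiv_lowerCong_quotient_frattiniP
    (I := maximalIdeal 𝒪 ^ (0 + 1)) (Ideal.pow_le_self one_ne_zero) hp hq
  have htriv (z : principalUnits 𝒪 (maximalIdeal 𝒪) ⧸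
      principalUnitsFrattini 𝒪 (maximalIdeal 𝒪 ^ (0 + 1)) p) : z = 1 :=
    QuotientGroup.induction_on z fun u => (QuotientGroup.eq_one_iff _).mpr <|
      Subgroup.mem_subgroupOf.mpr <| Subgroup.mem_sup_left <| by rw [zero_add, pow_one]; exact u.2
  simpa using congrArg e (htriv (e.symm y))
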